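/- Let R and S be nonnegative real vectors in ℝ^n with equal component sums. (I) There exists an n×n nonnegative real matrix A with row sum vector R and column sum vector S satisfying ρ_{π/2} A = A (invariance under rotation by π/2, i.e. a_{i,j} = a_{n+1−j, i} for all i,j) if and only if (a) R = S and (b) R is palindromic. (II) If R and S are nonnegative integer vectors, there exists such a matrix with nonnegative integer entries if and only if (a) and (b) hold together with at least one of: (c) r_1 + r_2 + ⋯ + r_⌊n/2⌋ is even, or (d) n is odd and r_⌈n/2⌉ ≥ 2. -/

import Mathlib

/-!
Write `ρ A i j = A j.rev i`. An invariant matrix is constant on the orbits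
`(i, j) ↦ (j.rev, i) ↦ (i.rev, j.rev) ↦ (j, i.rev)`, so its column sums are its row sums read
backwards and its row sums are palindromic: this gives (a) and (b). Conversely `R Rᵀ / ∑ R` is
invariant.

Over `ℕ`, let `L` be the indices below `n / 2` and `m` the middle index when `n` is odd. Invariance
gives the blocks `L × L` and `L × rev L` the same total, so `∑_{i ∈ L} r_i` is even up to the
entries `A i m` (`i ∈ L`), and each of these occurs twice in column `m`; an odd sum thus forces
`r_m ≥ 2`. Conversely, `M + ρM + ρ²M + ρ³M` has row sums `g i + g i.rev`, where `g` is the row-sum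
vector of `M + Mᵀ`, and every `g : ι → ℕ` of even total arises this way (pair off units greedily).
Take `g = r` on `L`, plus one unit at `m` when `∑_{i ∈ L} r_i` is odd, and put the rest of `r_m` on
the diagonal.
-/

open Finset

namespace Fin

variable {n : ℕ}

def lowerHalf (n : ℕ) : Finset (Fin n) := univ.filter fun i => (i : ℕ) < n / 2

def revFixed (n : ℕ) : Finset (Fin n) := univ.filter fun i => i.rev = i

theorem sum_comp_rev {α : Type*} [AddCommMonoid α] (f : Fin n → α) :
    ∑ i : Fin n, f i.rev = ∑ i, f i :=
  Equiv.sum_comp revPerm f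

theorem sum_eq_sum_lowerHalf_add_sum_revFixed {α : Type*} [AddCommMonoid α] (g : Fin n → α) :
    ∑ i, g i = ∑ i ∈ lowerHalf n, (g i + g i.rev) + ∑ i ∈ revFixed n, g i := by
  have hsplit : ∀ i : Fin n, g i = ((if (i : ℕ) < n / 2 then g i else 0) +
      if (i.rev : ℕ) < n / 2 then g i.rev.rev else 0) + if i.rev = i then g i else 0 := by
    intro i
    have := i.isLt
    split_ifs <;> simp_all [Fin.ext_iff, Fin.val_rev] <;> omega
  have hrev : ∑ i : Fin n, (if (i.rev : ℕ) < n / 2 then g i.rev.rev else 0) =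
      ∑ i : Fin n, if (i : ℕ) < n / 2 then g i.rev else 0 :=
    sum_comp_rev fun k => if (k : ℕ) < n / 2 then g k.rev else 0
  rw [sum_congr rfl fun i _ => hsplit i, sum_add_distrib, sum_add_distrib, hrev,
    ← sum_add_distrib, lowerHalf, revFixed, sum_filter, sum_filter]
  congr 1
  exact sum_congr rfl fun i _ => by split_ifs <;> simp

theorem ite_lt_half_add_ite_rev_lt_half {M : Type*} [AddMonoid M] (R : Fin n → M)
    (hpal : ∀ i, R i = R i.rev) (i : Fin n) :
    ((if (i : ℕ) < n / 2 then R i else 0) + if (i.rev : ℕ) < n / 2 then R i.rev else 0) =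
      if i.rev = i then 0 else R i := by
  have hi := i.isLt
  have hrev : (i.rev : ℕ) = n - (i + 1) := Fin.val_rev i
  by_cases h1 : (i : ℕ) < n / 2
  · have h2 : ¬ (i.rev : ℕ) < n / 2 := by omega
    have h3 : i.rev ≠ i := fun h => by rw [Fin.ext_iff] at h; omega
    rw [if_pos h1, if_neg h2, if_neg h3, add_zero]
  by_cases h2 : (i.rev : ℕ) < n / 2
  · have h3 : i.rev ≠ i := fun h => by rw [Fin.ext_iff] at h; omega
    rw [if_neg h1, if_pos h2, if_neg h3, zero_add, ← hpal i]
  · have h3 : i.rev = i := Fin.ext (by omega)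
    rw [if_neg h1, if_neg h2, if_pos h3, add_zero]

theorem exists_rev_eq_self_iff {p : Fin n → Prop} :
    (∃ c : Fin n, c.rev = c ∧ p c) ↔
      ∃ hn : n % 2 = 1, p ⟨n / 2, Nat.div_lt_self (Nat.odd_iff.mpr hn).pos one_lt_two⟩ := by
  constructor
  · rintro ⟨c, hc, hp⟩
    have hc' : 2 * (c : ℕ) + 1 = n := by
      have := c.isLt; rw [Fin.ext_iff, Fin.val_rev] at hc; omega
    have hmid : c = ⟨n / 2, by omega⟩ := Fin.ext (by simp; omega)
    exact ⟨by omega, hmid ▸ hp⟩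
  · rintro ⟨hn, hp⟩
    exact ⟨_, Fin.ext (by simp [Fin.val_rev]; omega), hp⟩

end Fin

theorem exists_eq_add_single_of_sum_eq_succ {ι : Type*} [Fintype ι] [DecidableEq ι]
    (f : ι → ℕ) {m : ℕ} (h : ∑ i, f i = m + 1) :
    ∃ (i : ι) (g : ι → ℕ), f = g + Pi.single i 1 ∧ ∑ i, g i = m := by
  obtain ⟨i, -, hi⟩ := exists_ne_zero_of_sum_ne_zero (by rw [h]; exact m.succ_ne_zero)
  have hf : f = (f - Pi.single i 1) + Pi.single i 1 := by
    funext a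
    rcases eq_or_ne a i with rfl | ha
    · simp only [Pi.add_apply, Pi.sub_apply, Pi.single_eq_same]
      omega
    · simp [ha]
  refine ⟨i, _, hf, ?_⟩
  have := congrArg (fun f : ι → ℕ => ∑ i, f i) hf
  simp only [Pi.add_apply, sum_add_distrib, sum_pi_single', mem_univ, if_true] at this
  omega

namespace Matrix

theorem sum_single_add_single_transpose {ι α : Type*} [Fintype ι] [DecidableEq ι]
    [AddCommMonoid α] (i j a : ι) (c : α) :
    ∑ k, (single i j c a k + single i j c k a) =
      (Pi.single i c : ι → α) a + (Pi.single j c : ι → α) a := by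
  by_cases hi : i = a <;> by_cases hj : j = a <;>
    simp [single_apply, sum_add_distrib, hi, hj, eq_comm]

theorem exists_sum_add_transpose_eq {ι : Type*} [Fintype ι] [DecidableEq ι] (f : ι → ℕ)
    (hf : Even (∑ i, f i)) : ∃ B : Matrix ι ι ℕ, ∀ i, ∑ j, (B i j + B j i) = f i := by
  obtain ⟨m, hm⟩ := hf
  induction m generalizing f with
  | zero => exact ⟨0, fun i => by simpa using (sum_eq_zero_iff.mp hm i (mem_univ i)).symm⟩
  | succ m ih =>
    obtain ⟨i, g, rfl, hg⟩ := exists_eq_add_single_of_sum_eq_succ f (m := m + m + 1) (by omega)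
    obtain ⟨j, h, rfl, hh⟩ := exists_eq_add_single_of_sum_eq_succ g hg
    obtain ⟨B, hB⟩ := ih h hh
    refine ⟨B + single i j 1, fun a => ?_⟩
    have := sum_single_add_single_transpose i j a 1
    simp only [add_apply, Pi.add_apply] at this ⊢
    rw [← hB, add_assoc, add_comm (Pi.single j 1 a), ← this, ← sum_add_distrib]
    exact sum_congr rfl fun _ _ => by ring

variable {n : ℕ} {α : Type*}

def IsQuarterTurnInvariant (A : Matrix (Fin n) (Fin n) α) : Prop :=
  ∀ i j, A i j = A j.rev i

namespace IsQuarterTurnInvariant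

variable {A : Matrix (Fin n) (Fin n) α}

theorem add [Add α] {B : Matrix (Fin n) (Fin n) α} (hA : A.IsQuarterTurnInvariant)
    (hB : B.IsQuarterTurnInvariant) : (A + B).IsQuarterTurnInvariant := fun i j => by
  simp only [add_apply, hA i j, hB i j]

theorem apply_rev_right (hA : A.IsQuarterTurnInvariant) (i j : Fin n) : A i j.rev = A j i := by
  rw [hA, Fin.rev_rev]

theorem apply_rev_rev (hA : A.IsQuarterTurnInvariant) (i j : Fin n) : A i.rev j.rev = A i j := by
  rw [hA.apply_rev_right, hA.apply_rev_right]

variable [AddCommMonoid α]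

theorem sum_row_rev (hA : A.IsQuarterTurnInvariant) (i : Fin n) :
    ∑ j, A i.rev j = ∑ j, A i j := by
  rw [← Fin.sum_comp_rev]
  exact sum_congr rfl fun j _ => hA.apply_rev_rev i j

theorem sum_col_eq_sum_row (hA : A.IsQuarterTurnInvariant) (j : Fin n) :
    ∑ i, A i j = ∑ i, A j i :=
  (sum_congr rfl fun i _ => hA i j).trans (hA.sum_row_rev j)

theorem eq_and_palindromic {R S : Fin n → α} (hA : A.IsQuarterTurnInvariant)
    (hrow : ∀ i, ∑ j, A i j = R i) (hcol : ∀ j, ∑ i, A i j = S j) :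
    R = S ∧ ∀ i, R i = R i.rev :=
  ⟨funext fun j => by rw [← hrow, ← hcol, hA.sum_col_eq_sum_row],
    fun i => by rw [← hrow, ← hrow, hA.sum_row_rev]⟩

theorem sum_lowerHalf_row (hA : A.IsQuarterTurnInvariant) :
    ∑ i ∈ Fin.lowerHalf n, ∑ j, A i j =
      2 • ∑ i ∈ Fin.lowerHalf n, ∑ j ∈ Fin.lowerHalf n, A i j +
        ∑ j ∈ Fin.revFixed n, ∑ i ∈ Fin.lowerHalf n, A i j := by
  calc ∑ i ∈ Fin.lowerHalf n, ∑ j, A i j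
      = ∑ i ∈ Fin.lowerHalf n, (∑ j ∈ Fin.lowerHalf n, (A i j + A j i) +
          ∑ j ∈ Fin.revFixed n, A i j) := sum_congr rfl fun i _ => by
        rw [Fin.sum_eq_sum_lowerHalf_add_sum_revFixed]
        simp only [hA.apply_rev_right]
    _ = _ := by
        rw [sum_add_distrib]
        congr 1
        · simp only [sum_add_distrib]
          rw [two_nsmul]
          congr 1
          exact sum_comm
        · exact sum_comm

theorem sum_col_of_rev_eq_self (hA : A.IsQuarterTurnInvariant) {j : Fin n} (hj : j.rev = j) :
    ∑ i, A i j = 2 • ∑ i ∈ Fin.lowerHalf n, A i j + ∑ i ∈ Fin.revFixed n, A i j := by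
  rw [Fin.sum_eq_sum_lowerHalf_add_sum_revFixed, two_nsmul, ← sum_add_distrib]
  congr 1
  refine sum_congr rfl fun i _ => ?_
  have := hA.apply_rev_rev i j
  rw [hj] at this
  rw [this]

end IsQuarterTurnInvariant

theorem IsQuarterTurnInvariant.even_or_exists_rev_eq_self {A : Matrix (Fin n) (Fin n) ℕ}
    (hA : A.IsQuarterTurnInvariant) :
    Even (∑ i ∈ Fin.lowerHalf n, ∑ j, A i j) ∨ ∃ c : Fin n, c.rev = c ∧ 2 ≤ ∑ j, A c j := by
  refine or_iff_not_imp_left.mpr fun hodd => ?_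
  have hfix : ∑ j ∈ Fin.revFixed n, ∑ i ∈ Fin.lowerHalf n, A i j ≠ 0 := by
    intro h
    rw [hA.sum_lowerHalf_row, h, add_zero] at hodd
    exact hodd (by rw [smul_eq_mul]; exact even_two_mul _)
  obtain ⟨c, hcF, hne⟩ := exists_ne_zero_of_sum_ne_zero hfix
  have hc : c.rev = c := (mem_filter.mp hcF).2
  refine ⟨c, hc, ?_⟩
  rw [← hA.sum_col_eq_sum_row, hA.sum_col_of_rev_eq_self hc, smul_eq_mul]
  omega

theorem isQuarterTurnInvariant_diagonal [Zero α] (d : Fin n → α)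
    (hd : ∀ i, i.rev ≠ i → d i = 0) : (diagonal d).IsQuarterTurnInvariant := by
  intro i j
  simp only [diagonal_apply]
  split_ifs with h1 h2 h2
  · subst h1; rw [h2]
  · subst h1; exact hd i h2
  · subst h2; exact (hd _ (by rwa [Fin.rev_rev, ne_comm])).symm
  · rfl

/-- `M + ρ M + ρ² M + ρ³ M`. -/
def quarterTurnSum [Add α] (M : Matrix (Fin n) (Fin n) α) : Matrix (Fin n) (Fin n) α :=
  fun i j => M i j + M j.rev i + M i.rev j.rev + M j i.rev

theorem isQuarterTurnInvariant_quarterTurnSum [AddCommMonoid α] (M : Matrix (Fin n) (Fin n) α) :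
    (quarterTurnSum M).IsQuarterTurnInvariant := by
  intro i j
  simp only [quarterTurnSum, Fin.rev_rev]
  abel

theorem sum_quarterTurnSum_apply [AddCommMonoid α] (M : Matrix (Fin n) (Fin n) α) (i : Fin n) :
    ∑ j, quarterTurnSum M i j = ∑ j, (M i j + M j i) + ∑ j, (M i.rev j + M j i.rev) := by
  simp only [quarterTurnSum, sum_add_distrib, Fin.sum_comp_rev (fun j => M j i),
    Fin.sum_comp_rev (M i.rev)]
  abel

theorem exists_isQuarterTurnInvariant_of_even_sum (R f : Fin n → ℕ) (hf : Even (∑ i, f i))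
    (hle : ∀ i, f i + f i.rev ≤ R i) (heq : ∀ i, i.rev ≠ i → f i + f i.rev = R i) :
    ∃ A : Matrix (Fin n) (Fin n) ℕ, (∀ i, ∑ j, A i j = R i) ∧ A.IsQuarterTurnInvariant := by
  obtain ⟨B, hB⟩ := exists_sum_add_transpose_eq f hf
  refine ⟨quarterTurnSum B + diagonal fun i => R i - (f i + f i.rev), fun i => ?_,
    (isQuarterTurnInvariant_quarterTurnSum B).add
      (isQuarterTurnInvariant_diagonal _ fun i hi => by rw [heq i hi, Nat.sub_self])⟩
  simp only [add_apply, sum_add_distrib, sum_quarterTurnSum_apply, hB, diagonal_apply,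
    sum_ite_eq, mem_univ, if_true]
  have := hle i
  omega

theorem exists_isQuarterTurnInvariant_nat (R : Fin n → ℕ) (hpal : ∀ i, R i = R i.rev)
    (h : Even (∑ i ∈ Fin.lowerHalf n, R i) ∨ ∃ c : Fin n, c.rev = c ∧ 2 ≤ R c) :
    ∃ A : Matrix (Fin n) (Fin n) ℕ, (∀ i, ∑ j, A i j = R i) ∧ A.IsQuarterTurnInvariant := by
  set f : Fin n → ℕ := fun i => if (i : ℕ) < n / 2 then R i else 0
  have hfsum : ∑ i, f i = ∑ i ∈ Fin.lowerHalf n, R i := (sum_filter _ _).symm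
  have hfrev : ∀ i, f i + f i.rev = if i.rev = i then 0 else R i :=
    Fin.ite_lt_half_add_ite_rev_lt_half R hpal
  have hfle : ∀ i, f i + f i.rev ≤ R i := fun i => by
    rw [hfrev]
    split_ifs <;> simp
  by_cases heven : Even (∑ i ∈ Fin.lowerHalf n, R i)
  · exact exists_isQuarterTurnInvariant_of_even_sum R f (hfsum ▸ heven) hfle
      fun i hi => by rw [hfrev, if_neg hi]
  obtain ⟨c, hc, hRc⟩ := h.resolve_left heven
  have hsingle : ∀ i, i ≠ c →
      (Pi.single c 1 : Fin n → ℕ) i + (Pi.single c 1 : Fin n → ℕ) i.rev = 0 := fun i hi => by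
    have hi' : i.rev ≠ c := fun h => hi (by rw [← hc]; exact Fin.rev_eq_iff.mp h)
    simp [hi, hi']
  refine exists_isQuarterTurnInvariant_of_even_sum R (f + Pi.single c 1) ?_ (fun i => ?_)
    fun i hi => ?_
  · simp only [Pi.add_apply, sum_add_distrib, hfsum, sum_pi_single', mem_univ, if_true]
    exact Nat.even_add_one.mpr heven
  · simp only [Pi.add_apply]
    rcases eq_or_ne i c with rfl | hic
    · have := hfrev i
      rw [if_pos hc] at this
      simp only [hc, Pi.single_eq_same] at this ⊢
      omega
    · have := hsingle i hic
      have := hfle i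
      omega
  · have := hsingle i (fun h => hi (h ▸ hc))
    have := hfrev i
    rw [if_neg hi] at this
    simp only [Pi.add_apply]
    omega

theorem exists_nonneg_isQuarterTurnInvariant_real (R : Fin n → ℝ) (hR : ∀ i, 0 ≤ R i)
    (hpal : ∀ i, R i = R i.rev) :
    ∃ A : Matrix (Fin n) (Fin n) ℝ,
      (∀ i j, 0 ≤ A i j) ∧ (∀ i, ∑ j, A i j = R i) ∧ A.IsQuarterTurnInvariant := by
  set T := ∑ k, R k
  refine ⟨of fun i j => R i * R j / T,
    fun i j => div_nonneg (mul_nonneg (hR i) (hR j)) (sum_nonneg fun k _ => hR k),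
    fun i => ?_, fun i j => ?_⟩
  · simp only [of_apply]
    rw [← sum_div, ← mul_sum]
    rcases eq_or_ne T 0 with hT | hT
    · rw [(sum_eq_zero_iff_of_nonneg fun k _ => hR k).mp hT i (mem_univ i)]
      simp
    · exact mul_div_cancel_right₀ _ hT
  · simp only [of_apply]
    rw [← hpal j, mul_comm]

theorem exists_isQuarterTurnInvariant_real_iff (R S : Fin n → ℝ) (hR : ∀ i, 0 ≤ R i) :
    (∃ A : Matrix (Fin n) (Fin n) ℝ, (∀ i j, 0 ≤ A i j) ∧ (∀ i, ∑ j, A i j = R i) ∧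
        (∀ j, ∑ i, A i j = S j) ∧ A.IsQuarterTurnInvariant) ↔
      R = S ∧ ∀ i, R i = R i.rev := by
  constructor
  · rintro ⟨A, -, hrow, hcol, hA⟩
    exact hA.eq_and_palindromic hrow hcol
  · rintro ⟨rfl, hpal⟩
    obtain ⟨A, hA0, hrow, hA⟩ := exists_nonneg_isQuarterTurnInvariant_real R hR hpal
    exact ⟨A, hA0, hrow, fun j => (hA.sum_col_eq_sum_row j).trans (hrow j), hA⟩

theorem exists_isQuarterTurnInvariant_nat_iff (R S : Fin n → ℕ) :
    (∃ A : Matrix (Fin n) (Fin n) ℕ, (∀ i, ∑ j, A i j = R i) ∧ (∀ j, ∑ i, A i j = S j) ∧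
        A.IsQuarterTurnInvariant) ↔
      R = S ∧ (∀ i, R i = R i.rev) ∧
        (Even (∑ i ∈ Fin.lowerHalf n, R i) ∨ ∃ c : Fin n, c.rev = c ∧ 2 ≤ R c) := by
  constructor
  · rintro ⟨A, hrow, hcol, hA⟩
    refine ⟨(hA.eq_and_palindromic hrow hcol).1, (hA.eq_and_palindromic hrow hcol).2, ?_⟩
    simpa only [hrow] using hA.even_or_exists_rev_eq_self
  · rintro ⟨rfl, hpal, h⟩
    obtain ⟨A, hrow, hA⟩ := exists_isQuarterTurnInvariant_nat R hpal h
    exact ⟨A, hrow, fun j => (hA.sum_col_eq_sum_row j).trans (hrow j), hA⟩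

end Matrix

/-- **Transportation with quarter-turn symmetry (`ρ_{π/2}`).**
(I) `𝒯^{π/2}(R,S) ≠ ∅` iff (a) `R = S` and (b) `R` is palindromic.
(II) For nonnegative integer `R`, `S`: `𝒯^{π/2}_ℤ(R,S) ≠ ∅` iff (a) and (b)
hold together with at least one of (c) `r_1 + ⋯ + r_{⌊n/2⌋}` is even, or
(d) `n` is odd and `r_{⌈n/2⌉} ≥ 2`. -/
theorem quarter_turn_transportation (n : ℕ) (R S : Fin n → ℝ)
    (hR : ∀ i, 0 ≤ R i) :
    ((∃ A : Matrix (Fin n) (Fin n) ℝ,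
        (∀ i j, 0 ≤ A i j) ∧
        (∀ i, ∑ j, A i j = R i) ∧
        (∀ j, ∑ i, A i j = S j) ∧
        (∀ i j, A i j = A j.rev i)) ↔
      (R = S ∧ ∀ i, R i = R i.rev))
    ∧ (∀ (R' S' : Fin n → ℕ),
        (∀ i, (R' i : ℝ) = R i) → (∀ j, (S' j : ℝ) = S j) →
        ((∃ A : Matrix (Fin n) (Fin n) ℕ,
            (∀ i, ∑ j, A i j = R' i) ∧
            (∀ j, ∑ i, A i j = S' j) ∧
            (∀ i j, A i j = A j.rev i)) ↔
          (R' = S' ∧ (∀ i, R' i = R' i.rev) ∧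
            ((∑ i ∈ Finset.univ.filter (fun i : Fin n => (i : ℕ) < n / 2), R' i) % 2 = 0 ∨
              ∃ hn : n % 2 = 1, 2 ≤ R' ⟨n / 2, by omega⟩)))) := by
  refine ⟨Matrix.exists_isQuarterTurnInvariant_real_iff R S hR, fun R' S' _ _ =>
    (Matrix.exists_isQuarterTurnInvariant_nat_iff R' S').trans ?_⟩
  rw [Nat.even_iff, Fin.exists_rev_eq_self_iff]
  rfl
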